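/- Let G be a finite loopless multigraph, ℓ ≥ 1, and suppose two distinct (ℓ+1)-links Q, Q′ of G both have the same pair (L₀, L₁) of length-ℓ subsequences. Then G contains a pair of parallel edges e₀, e₁ between two vertices v₀, v₁, and L₀, L₁, Q, Q′ are all walks alternating along only the edges e₀ and e₁. -/

import Mathlib

/-- A multigraph: a type of vertices, a type of edges, and an incidence map
sending each edge to an unordered pair of vertices. -/
structure Multigraph (V E : Type) where
  inc : E → Sym2 V

namespace Multigraph

variable {V E : Type}

/-- A multigraph is loopless if no edge joins a vertex to itself. -/
def Loopless (G : Multigraph V E) : Prop := ∀ e : E, ¬ (G.inc e).IsDiag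

/-- A multigraph is simple if it is loopless and has no parallel edges. -/
def Simple (G : Multigraph V E) : Prop := G.Loopless ∧ Function.Injective G.inc

/-- The underlying simple graph of a multigraph. -/
def toSimple (G : Multigraph V E) : SimpleGraph V where
  Adj u v := u ≠ v ∧ ∃ e : E, G.inc e = s(u, v)
  symm := by
    constructor
    rintro u v ⟨huv, e, he⟩
    exact ⟨Ne.symm huv, e, by rw [he, Sym2.eq_swap]⟩
  loopless := by constructor; rintro v ⟨h, _⟩; exact h rfl

/-- The degree of a vertex: the number of edges incident to it. -/
noncomputable def degree (G : Multigraph V E) (v : V) : ℕ := Nat.card {e : E // v ∈ G.inc e}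

/-- The number of edges of a multigraph. -/
noncomputable def edgeCard (_G : Multigraph V E) : ℕ := Nat.card E

/-- An `ℓ`-arc (non-backtracking walk of length `ℓ`): an alternating sequence of
vertices and edges with consecutive edges distinct. -/
@[ext]
structure Arc (G : Multigraph V E) (ℓ : ℕ) where
  verts : Fin (ℓ + 1) → V
  edges : Fin ℓ → E
  inc_eq : ∀ i : Fin ℓ, G.inc (edges i) = s(verts i.castSucc, verts i.succ)
  nb : ∀ i j : Fin ℓ, (i : ℕ) + 1 = (j : ℕ) → edges i ≠ edges j

variable {G : Multigraph V E}

/-- The reverse of an arc. -/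
def Arc.reverse {ℓ : ℕ} (A : G.Arc ℓ) : G.Arc ℓ where
  verts i := A.verts i.rev
  edges i := A.edges i.rev
  inc_eq i := by
    show G.inc (A.edges i.rev) = s(A.verts i.castSucc.rev, A.verts i.succ.rev)
    rw [Fin.rev_castSucc, Fin.rev_succ, A.inc_eq i.rev, Sym2.eq_swap]
  nb i j hij h := by
    refine A.nb j.rev i.rev ?_ (h.symm)
    have hi := i.isLt
    have hj := j.isLt
    simp only [Fin.val_rev]
    omega

lemma Arc.reverse_reverse {ℓ : ℕ} (A : G.Arc ℓ) : A.reverse.reverse = A := by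
  ext i
  · show A.verts i.rev.rev = A.verts i
    rw [Fin.rev_rev]
  · show A.edges i.rev.rev = A.edges i
    rw [Fin.rev_rev]

/-- The length-`ℓ` prefix of an `(ℓ+1)`-arc. -/
def Arc.init {ℓ : ℕ} (A : G.Arc (ℓ + 1)) : G.Arc ℓ where
  verts i := A.verts i.castSucc
  edges i := A.edges i.castSucc
  inc_eq i := by
    show G.inc (A.edges i.castSucc) = s(A.verts i.castSucc.castSucc, A.verts i.succ.castSucc)
    rw [A.inc_eq i.castSucc, Fin.succ_castSucc]
  nb i j hij h := A.nb i.castSucc j.castSucc (by simpa using hij) h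

/-- The length-`ℓ` suffix of an `(ℓ+1)`-arc. -/
def Arc.tail {ℓ : ℕ} (A : G.Arc (ℓ + 1)) : G.Arc ℓ where
  verts i := A.verts i.succ
  edges i := A.edges i.succ
  inc_eq i := by
    show G.inc (A.edges i.succ) = s(A.verts i.castSucc.succ, A.verts i.succ.succ)
    rw [A.inc_eq i.succ, Fin.succ_castSucc]
  nb i j hij h := A.nb i.succ j.succ (by simpa using hij) h

lemma Arc.reverse_init {ℓ : ℕ} (A : G.Arc (ℓ + 1)) : A.reverse.init = A.tail.reverse := by
  ext i
  · show A.verts (Fin.castSucc i).rev = A.verts i.rev.succ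
    rw [Fin.rev_castSucc]
  · show A.edges (Fin.castSucc i).rev = A.edges i.rev.succ
    rw [Fin.rev_castSucc]

lemma Arc.reverse_tail {ℓ : ℕ} (A : G.Arc (ℓ + 1)) : A.reverse.tail = A.init.reverse := by
  ext i
  · show A.verts (Fin.succ i).rev = A.verts i.rev.castSucc
    rw [Fin.rev_succ]
  · show A.edges (Fin.succ i).rev = A.edges i.rev.castSucc
    rw [Fin.rev_succ]

/-- The reversal relation on arcs. -/
def LinkRel (G : Multigraph V E) {ℓ : ℕ} (A B : G.Arc ℓ) : Prop := B = A.reverse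

/-- An `ℓ`-link: an `ℓ`-arc up to reversal. -/
def Link (G : Multigraph V E) (ℓ : ℕ) : Type := Quot (G.LinkRel (ℓ := ℓ))

/-- The `ℓ`-link determined by an `ℓ`-arc. -/
def Link.mk {ℓ : ℕ} (A : G.Arc ℓ) : G.Link ℓ := Quot.mk (G.LinkRel) A

lemma Link.mk_reverse {ℓ : ℕ} (A : G.Arc ℓ) : (Link.mk A.reverse : G.Link ℓ) = Link.mk A :=
  (Quot.sound (show G.LinkRel A A.reverse from rfl)).symm

/-- The unordered pair of `ℓ`-links that are the two length-`ℓ` subsequences of an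
`(ℓ+1)`-link. -/
def linkEnds (G : Multigraph V E) {ℓ : ℕ} : G.Link (ℓ + 1) → Sym2 (G.Link ℓ) :=
  Quot.lift (fun A => s(Link.mk A.init, Link.mk A.tail)) (by
    rintro A B rfl
    show s(Link.mk A.init, Link.mk A.tail) = s(Link.mk A.reverse.init, Link.mk A.reverse.tail)
    rw [Arc.reverse_init, Arc.reverse_tail, Link.mk_reverse, Link.mk_reverse, Sym2.eq_swap])

/-- The `ℓ`-link graph of `G`: vertices are the `ℓ`-links, and for each
`(ℓ+1)`-link there is one edge joining its two length-`ℓ` subsequences. -/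
def linkGraph (G : Multigraph V E) (ℓ : ℕ) : Multigraph (G.Link ℓ) (G.Link (ℓ + 1)) where
  inc := G.linkEnds

/-- The set of edges used by an arc. -/
def Arc.edgeSet {ℓ : ℕ} (A : G.Arc ℓ) : Set E := Set.range A.edges

/-- The set of vertices used by an arc. -/
def Arc.vertSet {ℓ : ℕ} (A : G.Arc ℓ) : Set V := Set.range A.verts

lemma Arc.edgeSet_reverse {ℓ : ℕ} (A : G.Arc ℓ) : A.reverse.edgeSet = A.edgeSet := by
  ext e
  constructor
  · rintro ⟨i, rfl⟩; exact ⟨i.rev, rfl⟩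
  · rintro ⟨i, rfl⟩; exact ⟨i.rev, by show A.edges i.rev.rev = _; rw [Fin.rev_rev]⟩

lemma Arc.vertSet_reverse {ℓ : ℕ} (A : G.Arc ℓ) : A.reverse.vertSet = A.vertSet := by
  ext v
  constructor
  · rintro ⟨i, rfl⟩; exact ⟨i.rev, rfl⟩
  · rintro ⟨i, rfl⟩; exact ⟨i.rev, by show A.verts i.rev.rev = _; rw [Fin.rev_rev]⟩

/-- The set of edges used by a link. -/
def Link.edgeSet {ℓ : ℕ} : G.Link ℓ → Set E :=
  Quot.lift Arc.edgeSet (by rintro A B rfl; exact (Arc.edgeSet_reverse A).symm)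

/-- The set of vertices used by a link. -/
def Link.vertSet {ℓ : ℕ} : G.Link ℓ → Set V :=
  Quot.lift Arc.vertSet (by rintro A B rfl; exact (Arc.vertSet_reverse A).symm)

lemma Arc.tail_init_comm {ℓ : ℕ} (A : G.Arc (ℓ + 2)) : A.tail.init = A.init.tail := by
  ext i
  · show A.verts (Fin.castSucc i).succ = A.verts (Fin.succ i).castSucc
    rw [Fin.succ_castSucc]
  · show A.edges (Fin.castSucc i).succ = A.edges (Fin.succ i).castSucc
    rw [Fin.succ_castSucc]

/-- The middle `ℓ`-segment of an `(ℓ+2)`-arc, obtained by deleting the first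
and last edge. -/
def Arc.mid2 {ℓ : ℕ} (A : G.Arc (ℓ + 2)) : G.Arc ℓ := A.tail.init

lemma Arc.mid2_reverse {ℓ : ℕ} (A : G.Arc (ℓ + 2)) : A.reverse.mid2 = A.mid2.reverse := by
  show A.reverse.tail.init = A.tail.init.reverse
  rw [Arc.reverse_tail, Arc.reverse_init, Arc.tail_init_comm]

/-- The middle `ℓ`-segment of an `(ℓ+2)`-link. -/
def Link.mid2 {ℓ : ℕ} : G.Link (ℓ + 2) → G.Link ℓ :=
  Quot.lift (fun A => Link.mk A.mid2) (by
    rintro A B rfl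
    show Link.mk A.mid2 = Link.mk A.reverse.mid2
    rw [Arc.mid2_reverse, Link.mk_reverse])

/-- The middle unit of an arc: its middle vertex if its length is even, and its
middle edge if its length is odd. -/
def Arc.midUnit {ℓ : ℕ} (A : G.Arc ℓ) : V ⊕ E :=
  if h : Even ℓ then Sum.inl (A.verts ⟨ℓ / 2, by omega⟩)
  else Sum.inr (A.edges ⟨ℓ / 2, by
    have : ℓ % 2 = 1 := Nat.not_even_iff.mp h
    omega⟩)

lemma Arc.midUnit_reverse {ℓ : ℕ} (A : G.Arc ℓ) : A.reverse.midUnit = A.midUnit := by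
  by_cases h : Even ℓ
  · rw [Arc.midUnit, Arc.midUnit, dif_pos h, dif_pos h]
    have hk : ℓ % 2 = 0 := Nat.even_iff.mp h
    congr 1
    show A.verts (⟨ℓ / 2, _⟩ : Fin (ℓ + 1)).rev = A.verts _
    congr 1
    ext
    rw [Fin.val_rev]
    show ℓ + 1 - (ℓ / 2 + 1) = ℓ / 2
    omega
  · rw [Arc.midUnit, Arc.midUnit, dif_neg h, dif_neg h]
    have hk : ℓ % 2 = 1 := Nat.not_even_iff.mp h
    congr 1
    show A.edges (⟨ℓ / 2, _⟩ : Fin ℓ).rev = A.edges _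
    congr 1
    ext
    rw [Fin.val_rev]
    show ℓ - (ℓ / 2 + 1) = ℓ / 2
    omega

/-- The middle unit of a link: its middle vertex (even length) or middle edge
(odd length). -/
def Link.midUnit {ℓ : ℕ} : G.Link ℓ → V ⊕ E :=
  Quot.lift Arc.midUnit (by rintro A B rfl; exact (Arc.midUnit_reverse A).symm)

/-- `G` has a (nonnull) subgraph of minimum degree at least `d`. -/
def HasMinDegSubgraph (G : Multigraph V E) (d : ℕ) : Prop :=
  ∃ (V' : Set V) (E' : Set E), V'.Nonempty ∧ (∀ e ∈ E', ∀ v ∈ G.inc e, v ∈ V') ∧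
    ∀ v ∈ V', d ≤ Nat.card {e : E // e ∈ E' ∧ v ∈ G.inc e}

/-- The degeneracy of `G`: the maximum over subgraphs of the minimum degree. -/
noncomputable def degeneracy (G : Multigraph V E) : ℕ := sSup {d | G.HasMinDegSubgraph d}

/-- The edge-chromatic number of a multigraph: the least `t` such that the edges
can be `t`-coloured with edges sharing an endpoint getting distinct colours. -/
noncomputable def edgeChromaticNumber (G : Multigraph V E) : ℕ :=
  sInf {t | ∃ c : E → Fin t, ∀ e f : E, e ≠ f → (∃ v, v ∈ G.inc e ∧ v ∈ G.inc f) → c e ≠ c f}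

/-- The complete bipartite multigraph `K_{n,m}` (one edge for each pair). -/
def completeBipartiteMG (n m : ℕ) : Multigraph (Fin n ⊕ Fin m) (Fin n × Fin m) :=
  ⟨fun p => s(Sum.inl p.1, Sum.inr p.2)⟩

end Multigraph

/-- `H` contains a complete minor on `t` branch sets: `t` pairwise disjoint
nonempty connected subsets of vertices with an edge between every two of them. -/
def SimpleGraph.HasKMinor {W : Type} (H : SimpleGraph W) (t : ℕ) : Prop :=
  ∃ B : Fin t → Set W,
    (∀ i, (B i).Nonempty) ∧
    (∀ i, ((H.induce (B i)).Connected)) ∧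
    (∀ i j, i ≠ j → Disjoint (B i) (B j)) ∧
    (∀ i j, i ≠ j → ∃ u ∈ B i, ∃ v ∈ B j, H.Adj u v)


/-! Write `Q = [A]` and `Q' = [B]`, with `B` oriented so that its prefix and suffix represent the
same links as those of `A`; as arcs, each of them either agrees with that of `A` or is its reverse.
If both agree, `B = A`. If exactly one is reversed, a sub-arc `W` of `A` satisfies
`W.init = W.tail.reverse`, so its middle unit is a loop (odd length) or a backtrack (even length).
If both are reversed, chasing the common middle segment of `B` gives `A.init.init = A.tail.tail`:
`A` is 2-periodic, so it alternates along its first two edges, which are parallel. -/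

namespace Multigraph

variable {V E : Type} {G : Multigraph V E} {ℓ n : ℕ}

theorem Loopless.ne_of_inc_eq (hG : G.Loopless) {e : E} {u v : V} (he : G.inc e = s(u, v)) :
    u ≠ v := fun huv => hG e (by rw [he, Sym2.mk_isDiag_iff]; exact huv)

namespace Arc

@[simp] theorem init_verts (A : G.Arc (ℓ + 1)) (i : Fin (ℓ + 1)) :
    A.init.verts i = A.verts i.castSucc := rfl

@[simp] theorem init_edges (A : G.Arc (ℓ + 1)) (i : Fin ℓ) :
    A.init.edges i = A.edges i.castSucc := rfl

@[simp] theorem tail_verts (A : G.Arc (ℓ + 1)) (i : Fin (ℓ + 1)) :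
    A.tail.verts i = A.verts i.succ := rfl

@[simp] theorem tail_edges (A : G.Arc (ℓ + 1)) (i : Fin ℓ) :
    A.tail.edges i = A.edges i.succ := rfl

@[simp] theorem reverse_verts (A : G.Arc ℓ) (i : Fin (ℓ + 1)) :
    A.reverse.verts i = A.verts i.rev := rfl

@[simp] theorem reverse_edges (A : G.Arc ℓ) (i : Fin ℓ) :
    A.reverse.edges i = A.edges i.rev := rfl

theorem reverse_injective : Function.Injective (reverse : G.Arc ℓ → G.Arc ℓ) :=
  Function.LeftInverse.injective reverse_reverse

theorem ext_of_init_of_tail {A B : G.Arc (n + 2)} (hi : A.init = B.init) (ht : A.tail = B.tail) :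
    A = B := by
  have hv := congrArg verts hi
  have hv' := congrArg verts ht
  have he := congrArg edges hi
  have he' := congrArg edges ht
  ext i
  · refine Fin.cases ?_ (fun j => ?_) i
    · simpa using congrFun hv 0
    · exact congrFun hv' j
  · refine Fin.cases ?_ (fun j => ?_) i
    · simpa using congrFun he 0
    · exact congrFun he' j

theorem edgeSet_init_subset (A : G.Arc (ℓ + 1)) : A.init.edgeSet ⊆ A.edgeSet := by
  rintro _ ⟨i, rfl⟩
  exact ⟨_, rfl⟩

theorem edgeSet_tail_subset (A : G.Arc (ℓ + 1)) : A.tail.edgeSet ⊆ A.edgeSet := by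
  rintro _ ⟨i, rfl⟩
  exact ⟨_, rfl⟩

theorem edgeSet_eq_init_union_tail (A : G.Arc (n + 2)) :
    A.edgeSet = A.init.edgeSet ∪ A.tail.edgeSet := by
  refine subset_antisymm ?_ (Set.union_subset A.edgeSet_init_subset A.edgeSet_tail_subset)
  rintro _ ⟨i, rfl⟩
  refine Fin.cases ?_ (fun j => ?_) i
  · exact Or.inl ⟨0, by simp⟩
  · exact Or.inr ⟨j, rfl⟩

/-- The middle position of `W` is fixed by reversal: it is a vertex joined to itself by an edge
when the length of `W` is odd, and an edge traversed twice in a row when it is even. -/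
theorem init_ne_reverse_tail (hG : G.Loopless) (W : G.Arc (n + 1)) :
    W.init ≠ W.tail.reverse := by
  intro h
  have hv := congrFun (congrArg verts h)
  have he := congrFun (congrArg edges h)
  have hmid : ∀ k, (⟨k, by omega⟩ : Fin (2 * k + 1)).rev = ⟨k, by omega⟩ := fun k => by
    ext; simp only [Fin.val_rev]; omega
  obtain ⟨k, rfl | rfl⟩ := Nat.even_or_odd' n
  · refine hG.ne_of_inc_eq (W.inc_eq ⟨k, by omega⟩) ?_
    simpa only [init_verts, reverse_verts, tail_verts, hmid] using hv ⟨k, by omega⟩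
  · have hk := he ⟨k, by omega⟩
    rw [init_edges, reverse_edges, tail_edges, hmid] at hk
    exact W.nb ⟨k, by omega⟩ ⟨k + 1, by omega⟩ rfl hk

theorem init_eq_reverse_and_tail_eq_reverse (hG : G.Loopless) {A B : G.Arc (n + 2)}
    (hne : B ≠ A) (hi : B.init = A.init ∨ B.init = A.init.reverse)
    (ht : B.tail = A.tail ∨ B.tail = A.tail.reverse) :
    B.init = A.init.reverse ∧ B.tail = A.tail.reverse := by
  rcases hi with hi | hi <;> rcases ht with ht | ht
  · exact absurd (ext_of_init_of_tail hi ht) hne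
  · refine absurd ?_ (init_ne_reverse_tail hG A.tail)
    rw [tail_init_comm, ← hi, ← tail_init_comm, ht, reverse_init]
  · refine absurd ?_ (init_ne_reverse_tail hG A.init)
    have h : A.init.tail = A.init.init.reverse := by
      rw [← tail_init_comm, ← ht, tail_init_comm, hi, reverse_tail]
    rw [h, reverse_reverse]
  · exact ⟨hi, ht⟩

theorem init_init_eq_tail_tail {A B : G.Arc (n + 2)} (hi : B.init = A.init.reverse)
    (ht : B.tail = A.tail.reverse) : A.init.init = A.tail.tail := by
  apply reverse_injective
  rw [← reverse_tail, ← hi, ← tail_init_comm, ht, reverse_init]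

theorem edgeSet_eq_of_init_tail_reverse {A B : G.Arc (n + 2)} (hi : B.init = A.init.reverse)
    (ht : B.tail = A.tail.reverse) : B.edgeSet = A.edgeSet := by
  rw [edgeSet_eq_init_union_tail, hi, ht, edgeSet_reverse, edgeSet_reverse,
    ← edgeSet_eq_init_union_tail]

theorem edgeSet_subset_pair_of_init_init_eq_tail_tail {A : G.Arc (n + 2)}
    (h : A.init.init = A.tail.tail) : A.edgeSet ⊆ {A.edges 0, A.edges 1} := by
  have key : ∀ m (hm : m < n + 2), A.edges ⟨m, hm⟩ ∈ ({A.edges 0, A.edges 1} : Set E) := by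
    intro m
    induction m using Nat.twoStepInduction with
    | zero => intro; exact Or.inl rfl
    | one => intro; exact Or.inr rfl
    | more m ih _ =>
      intro hm
      have hstep : A.edges ⟨m, by omega⟩ = A.edges ⟨m + 2, hm⟩ :=
        congrFun (congrArg edges h) ⟨m, by omega⟩
      exact hstep ▸ ih (by omega)
  rintro _ ⟨i, rfl⟩
  exact key i i.isLt

theorem inc_edges_one_of_init_init_eq_tail_tail {A : G.Arc (n + 2)}
    (h : A.init.init = A.tail.tail) : G.inc (A.edges 1) = s(A.verts 0, A.verts 1) := by
  have h₂ : A.verts 0 = A.verts (Fin.succ 1) := by simpa using congrFun (congrArg verts h) 0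
  rw [A.inc_eq 1, h₂, Sym2.eq_swap]
  simp

end Arc

theorem Link.mk_eq_mk_iff {A B : G.Arc ℓ} : Link.mk A = Link.mk B ↔ A = B ∨ A = B.reverse := by
  refine ⟨fun h => ?_, ?_⟩
  · have hpair : ({A, A.reverse} : Set (G.Arc ℓ)) = {B, B.reverse} :=
      congrArg (Quot.lift (fun C : G.Arc ℓ => ({C, C.reverse} : Set (G.Arc ℓ)))
        (by rintro C D rfl; rw [Arc.reverse_reverse, Set.pair_comm])) h
    have hmem : A ∈ ({B, B.reverse} : Set (G.Arc ℓ)) := hpair ▸ Set.mem_insert A _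
    exact hmem
  · rintro (rfl | rfl)
    · rfl
    · exact Link.mk_reverse B

theorem Link.edgeSet_subset_of_mem_linkEnds {A : G.Arc (ℓ + 1)} {L : G.Link ℓ}
    (hL : L ∈ G.linkEnds (Link.mk A)) : L.edgeSet ⊆ A.edgeSet := by
  rcases Sym2.mem_iff.1 hL with rfl | rfl
  · exact A.edgeSet_init_subset
  · exact A.edgeSet_tail_subset

theorem exists_mk_eq_of_linkEnds_eq {A : G.Arc (ℓ + 1)} {Q : G.Link (ℓ + 1)}
    (h : G.linkEnds Q = G.linkEnds (Link.mk A)) :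
    ∃ B : G.Arc (ℓ + 1), Link.mk B = Q ∧
      Link.mk B.init = Link.mk A.init ∧ Link.mk B.tail = Link.mk A.tail := by
  obtain ⟨B, rfl⟩ := Quot.exists_rep Q
  rcases Sym2.eq_iff.1 h with ⟨hi, ht⟩ | ⟨hi, ht⟩
  · exact ⟨B, rfl, hi, ht⟩
  · refine ⟨B.reverse, Link.mk_reverse B, ?_, ?_⟩
    · rw [Arc.reverse_init, Link.mk_reverse, ht]
    · rw [Arc.reverse_tail, Link.mk_reverse, hi]

end Multigraph

open Multigraph in
/-- If two distinct `(ℓ+1)`-links of a loopless multigraph have the same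
pair of length-`ℓ` subsequences `L₀, L₁`, then `G` has two parallel edges `e₀, e₁`
and `L₀, L₁, Q, Q'` all alternate along only the edges `e₀` and `e₁`. -/
theorem parallel_of_two_common_links {V E : Type} (G : Multigraph V E) (hG : G.Loopless)
    (ℓ : ℕ) (hℓ : 1 ≤ ℓ) (L₀ L₁ : G.Link ℓ) (Q Q' : G.Link (ℓ + 1)) (hne : Q ≠ Q')
    (hQ : G.linkEnds Q = s(L₀, L₁)) (hQ' : G.linkEnds Q' = s(L₀, L₁)) :
    ∃ (v₀ v₁ : V) (e₀ e₁ : E), e₀ ≠ e₁ ∧ v₀ ≠ v₁ ∧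
      G.inc e₀ = s(v₀, v₁) ∧ G.inc e₁ = s(v₀, v₁) ∧
      L₀.edgeSet ⊆ {e₀, e₁} ∧ L₁.edgeSet ⊆ {e₀, e₁} ∧
      Q.edgeSet ⊆ {e₀, e₁} ∧ Q'.edgeSet ⊆ {e₀, e₁} := by
  obtain ⟨n, rfl⟩ : ∃ n, ℓ = n + 1 := ⟨ℓ - 1, by omega⟩
  obtain ⟨A, rfl⟩ := Quot.exists_rep Q
  obtain ⟨B, rfl, hi, ht⟩ := exists_mk_eq_of_linkEnds_eq (hQ'.trans hQ.symm)
  obtain ⟨hi, ht⟩ := Arc.init_eq_reverse_and_tail_eq_reverse hG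
    (fun h => hne (congrArg Link.mk h.symm)) (Link.mk_eq_mk_iff.1 hi) (Link.mk_eq_mk_iff.1 ht)
  have hper := Arc.init_init_eq_tail_tail hi ht
  have hA := Arc.edgeSet_subset_pair_of_init_init_eq_tail_tail hper
  have he₀ : G.inc (A.edges 0) = s(A.verts 0, A.verts 1) := by simpa using A.inc_eq 0
  refine ⟨A.verts 0, A.verts 1, A.edges 0, A.edges 1, A.nb 0 1 (by simp),
    hG.ne_of_inc_eq he₀, he₀, Arc.inc_edges_one_of_init_init_eq_tail_tail hper,
    (Link.edgeSet_subset_of_mem_linkEnds (hQ ▸ Sym2.mem_mk_left _ _)).trans hA,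
    (Link.edgeSet_subset_of_mem_linkEnds (hQ ▸ Sym2.mem_mk_right _ _)).trans hA, hA,
    (Arc.edgeSet_eq_of_init_tail_reverse hi ht).subset.trans hA⟩
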